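/- arXiv:1609.06067 — 4 statements merged into one kernel-verified Lean document; each statement's English description precedes it below -/
import Mathlib

section
/- Let R be a commutative ring with an endomorphism φ, and suppose R decomposes as a direct sum R = ⊕_{i=0}^{p-1} u^i · φ(R) for a fixed unit u ∈ R. Define ψ : R → R by ψ(Σ_{i=0}^{p-1} u^i φ(x_i)) = x_0. If 0 → D' → D → D'' → 0 is a short exact sequence of free R-modules each equipped with a semilinear Frobenius φ such that the linearization φ* is an isomorphism (so ψ is defined on each by the same formula), then the induced sequence 0 → D'^{ψ=0} → D^{ψ=0} → D''^{ψ=0} → 0 is exact. -/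
/-!
Every element has an expansion `Σ u^i φ(c_i)`, and `ψ` reads off `c_0`. Expanding `φ m`
with `c = (m, 0, …, 0)` shows `ψ ∘ φ = id`, and a `φ`-equivariant linear map sends an
expansion to an expansion, hence commutes with `ψ`. Exactness in the middle then follows
from injectivity of `D' → D`. For surjectivity, a lift `y` of `z ∈ D''^{ψ=0}` has
`ψ y ∈ ker(D → D'')`, so `y - φ(ψ y)` is a lift of `z` killed by `ψ`.
-/

open Finset

section FrobeniusExpansion

variable {R M N : Type*} [Semiring R] [AddCommMonoid M] [Module R M]
  [AddCommMonoid N] [Module R N] {p : ℕ}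

def frobSum (u : R) (φ : M →+ M) (c : Fin p → M) : M :=
  ∑ i : Fin p, u ^ (i : ℕ) • φ (c i)

theorem frobSum_surjective_of_existsUnique {u : R} {φ : M →+ M}
    (hd : ∀ x : M, ∃! c : Fin p → M, x = ∑ i : Fin p, u ^ (i : ℕ) • φ (c i)) :
    Function.Surjective (frobSum (p := p) u φ) :=
  fun x => (hd x).exists.imp fun _ h => h.symm

theorem frobSum_single_zero (hp : 0 < p) (u : R) (φ : M →+ M) (m : M) :
    frobSum u φ (Pi.single ⟨0, hp⟩ m) = φ m := by
  rw [frobSum, sum_eq_single ⟨0, hp⟩]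
  · simp
  · intro i _ hi
    simp [Pi.single_eq_of_ne hi]
  · simp

theorem LinearMap.map_frobSum (f : M →ₗ[R] N) {φM : M →+ M} {φN : N →+ N}
    (hf : ∀ x, f (φM x) = φN (f x)) (u : R) (c : Fin p → M) :
    f (frobSum u φM c) = frobSum u φN (f ∘ c) := by
  simp only [frobSum, map_sum, map_smul, hf, Function.comp_apply]

theorem leftInverse_of_apply_frobSum (hp : 0 < p) {u : R} {φ ψ : M →+ M}
    (hψ : ∀ c : Fin p → M, ψ (frobSum u φ c) = c ⟨0, hp⟩) :
    Function.LeftInverse ψ φ := fun m => by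
  simpa [frobSum_single_zero] using hψ (Pi.single ⟨0, hp⟩ m)

theorem LinearMap.apply_psi_comm (hp : 0 < p) {u : R} (f : M →ₗ[R] N)
    {φM ψM : M →+ M} {φN ψN : N →+ N} (hf : ∀ x, f (φM x) = φN (f x))
    (hdec : Function.Surjective (frobSum (p := p) u φM))
    (hψM : ∀ c : Fin p → M, ψM (frobSum u φM c) = c ⟨0, hp⟩)
    (hψN : ∀ c : Fin p → N, ψN (frobSum u φN c) = c ⟨0, hp⟩) (x : M) :
    ψN (f x) = f (ψM x) := by
  obtain ⟨c, rfl⟩ := hdec x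
  rw [f.map_frobSum hf, hψN, hψM, Function.comp_apply]

end FrobeniusExpansion

theorem stmt_0_general {R : Type*} [CommRing R] (p : ℕ) (hp : p.Prime)
    (u : Rˣ)
    {M₁ M₂ M₃ : Type*}
    [AddCommGroup M₁] [Module R M₁]
    [AddCommGroup M₂] [Module R M₂]
    [AddCommGroup M₃] [Module R M₃]
    (φ₁ : M₁ →+ M₁) (φ₂ : M₂ →+ M₂) (φ₃ : M₃ →+ M₃)
    (hd₁ : ∀ x : M₁, ∃! c : Fin p → M₁, x = ∑ i : Fin p, ((u : R) ^ (i : ℕ)) • φ₁ (c i))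
    (hd₂ : ∀ x : M₂, ∃! c : Fin p → M₂, x = ∑ i : Fin p, ((u : R) ^ (i : ℕ)) • φ₂ (c i))
    (ψ₁ : M₁ →+ M₁) (ψ₂ : M₂ →+ M₂) (ψ₃ : M₃ →+ M₃)
    (hψ₁ : ∀ c : Fin p → M₁, ψ₁ (∑ i : Fin p, ((u : R) ^ (i : ℕ)) • φ₁ (c i)) = c ⟨0, hp.pos⟩)
    (hψ₂ : ∀ c : Fin p → M₂, ψ₂ (∑ i : Fin p, ((u : R) ^ (i : ℕ)) • φ₂ (c i)) = c ⟨0, hp.pos⟩)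
    (hψ₃ : ∀ c : Fin p → M₃, ψ₃ (∑ i : Fin p, ((u : R) ^ (i : ℕ)) • φ₃ (c i)) = c ⟨0, hp.pos⟩)
    (f : M₁ →ₗ[R] M₂) (g : M₂ →ₗ[R] M₃)
    (hfφ : ∀ x : M₁, f (φ₁ x) = φ₂ (f x)) (hgφ : ∀ y : M₂, g (φ₂ y) = φ₃ (g y))
    (hfinj : Function.Injective f) (hgsurj : Function.Surjective g)
    (hexact : ∀ y : M₂, g y = 0 ↔ ∃ x : M₁, f x = y) :
    -- exactness of 0 → D'^{ψ=0} → D^{ψ=0} → D''^{ψ=0} → 0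
    (∀ x : M₁, ψ₁ x = 0 → f x = 0 → x = 0) ∧
    (∀ y : M₂, ψ₂ y = 0 → g y = 0 → ∃ x : M₁, ψ₁ x = 0 ∧ f x = y) ∧
    (∀ z : M₃, ψ₃ z = 0 → ∃ y : M₂, ψ₂ y = 0 ∧ g y = z) := by
  have hfψ := f.apply_psi_comm hp.pos hfφ (frobSum_surjective_of_existsUnique hd₁) hψ₁ hψ₂
  have hgψ := g.apply_psi_comm hp.pos hgφ (frobSum_surjective_of_existsUnique hd₂) hψ₂ hψ₃
  have hψφ₂ := leftInverse_of_apply_frobSum hp.pos hψ₂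
  refine ⟨fun x _ hx => (injective_iff_map_eq_zero f).mp hfinj x hx, ?_, ?_⟩
  · rintro y hψy hgy
    obtain ⟨x, rfl⟩ := (hexact y).mp hgy
    refine ⟨x, (injective_iff_map_eq_zero f).mp hfinj _ ?_, rfl⟩
    rw [← hfψ, hψy]
  · rintro z hψz
    obtain ⟨y, rfl⟩ := hgsurj z
    have hgψy : g (ψ₂ y) = 0 := by rw [← hgψ, hψz]
    refine ⟨y - φ₂ (ψ₂ y), ?_, ?_⟩
    · rw [map_sub, hψφ₂, sub_self]
    · rw [map_sub, hgφ, hgψy, map_zero, sub_zero]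

/-- Let `R` be a commutative ring with endomorphism `φ` decomposing as
`R = ⊕_{i=0}^{p−1} u^i·φ(R)` for a unit `u`, and let `ψ` be defined by
`ψ(Σ u^i φ(x_i)) = x₀`.  If `0 → D' → D → D'' → 0` is a short exact sequence of free
`R`-modules with semilinear Frobenii whose linearizations are isomorphisms (encoded by the
unique `φ`-decompositions `hd₁, hd₂, hd₃`, which also define `ψ` on each module), then
`0 → D'^{ψ=0} → D^{ψ=0} → D''^{ψ=0} → 0` is exact. -/
theorem stmt_0 {R : Type*} [CommRing R] (p : ℕ) (hp : p.Prime)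
    (φR : R →+* R) (u : Rˣ)
    (hdecR : ∀ r : R, ∃! c : Fin p → R, r = ∑ i : Fin p, (u : R) ^ (i : ℕ) * φR (c i))
    {M₁ M₂ M₃ : Type*}
    [AddCommGroup M₁] [Module R M₁] [Module.Free R M₁] [Module.Finite R M₁]
    [AddCommGroup M₂] [Module R M₂] [Module.Free R M₂] [Module.Finite R M₂]
    [AddCommGroup M₃] [Module R M₃] [Module.Free R M₃] [Module.Finite R M₃]
    (φ₁ : M₁ →+ M₁) (φ₂ : M₂ →+ M₂) (φ₃ : M₃ →+ M₃)
    (hs₁ : ∀ (r : R) (x : M₁), φ₁ (r • x) = φR r • φ₁ x)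
    (hs₂ : ∀ (r : R) (x : M₂), φ₂ (r • x) = φR r • φ₂ x)
    (hs₃ : ∀ (r : R) (x : M₃), φ₃ (r • x) = φR r • φ₃ x)
    (hd₁ : ∀ x : M₁, ∃! c : Fin p → M₁, x = ∑ i : Fin p, ((u : R) ^ (i : ℕ)) • φ₁ (c i))
    (hd₂ : ∀ x : M₂, ∃! c : Fin p → M₂, x = ∑ i : Fin p, ((u : R) ^ (i : ℕ)) • φ₂ (c i))
    (hd₃ : ∀ x : M₃, ∃! c : Fin p → M₃, x = ∑ i : Fin p, ((u : R) ^ (i : ℕ)) • φ₃ (c i))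
    (ψ₁ : M₁ →+ M₁) (ψ₂ : M₂ →+ M₂) (ψ₃ : M₃ →+ M₃)
    (hψ₁ : ∀ c : Fin p → M₁, ψ₁ (∑ i : Fin p, ((u : R) ^ (i : ℕ)) • φ₁ (c i)) = c ⟨0, hp.pos⟩)
    (hψ₂ : ∀ c : Fin p → M₂, ψ₂ (∑ i : Fin p, ((u : R) ^ (i : ℕ)) • φ₂ (c i)) = c ⟨0, hp.pos⟩)
    (hψ₃ : ∀ c : Fin p → M₃, ψ₃ (∑ i : Fin p, ((u : R) ^ (i : ℕ)) • φ₃ (c i)) = c ⟨0, hp.pos⟩)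
    (f : M₁ →ₗ[R] M₂) (g : M₂ →ₗ[R] M₃)
    (hfφ : ∀ x : M₁, f (φ₁ x) = φ₂ (f x)) (hgφ : ∀ y : M₂, g (φ₂ y) = φ₃ (g y))
    (hfinj : Function.Injective f) (hgsurj : Function.Surjective g)
    (hexact : ∀ y : M₂, g y = 0 ↔ ∃ x : M₁, f x = y) :
    -- exactness of 0 → D'^{ψ=0} → D^{ψ=0} → D''^{ψ=0} → 0
    (∀ x : M₁, ψ₁ x = 0 → f x = 0 → x = 0) ∧
    (∀ y : M₂, ψ₂ y = 0 → g y = 0 → ∃ x : M₁, ψ₁ x = 0 ∧ f x = y) ∧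
    (∀ z : M₃, ψ₃ z = 0 → ∃ y : M₂, ψ₂ y = 0 ∧ g y = z) :=
  stmt_0_general p hp u φ₁ φ₂ φ₃ hd₁ hd₂ ψ₁ ψ₂ ψ₃ hψ₁ hψ₂ hψ₃ f g hfφ hgφ hfinj hgsurj hexact
end

section
/- Let f : B₁ → B₂ be a continuous linear surjective map of p-adic Banach spaces (Banach spaces over ℚ_p). Then there exists a continuous (not necessarily linear) section s : B₂ → B₁ with f ∘ s = id. -/
/-!
By the open mapping theorem every `y ∈ B₂` has a preimage of norm at most `C‖y‖`. As `B₂` is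
ultrametric, the closed balls of radius `ε` partition it into open sets; choosing such a preimage
of one point in each ball gives a locally constant, hence continuous, `g` with
`‖f (g y) - y‖ ≤ ε` and `‖g y‖ ≤ C max ‖y‖ ε`. Correcting the error successively,
`s (n+1) y = s n y + g (y - f (s n y))` with `ε = 2⁻ⁿ⁻¹`, moves `s n y` by at most `C 2⁻ⁿ`, so the
`s n` converge uniformly to a continuous section.
-/

open Filter Topology

theorem exists_tendstoUniformly_of_dist_le_geometric {X α : Type*} [PseudoMetricSpace α]
    [CompleteSpace α] {F : ℕ → X → α} {C r : ℝ} (hr₀ : 0 ≤ r) (hr : r < 1)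
    (hF : ∀ n x, dist (F n x) (F (n + 1) x) ≤ C * r ^ n) :
    ∃ G : X → α, TendstoUniformly F G atTop := by
  choose G hG using fun x =>
    cauchySeq_tendsto_of_complete (cauchySeq_of_le_geometric r C hr (hF · x))
  refine ⟨G, Metric.tendstoUniformly_iff.2 fun ε hε => ?_⟩
  have hbound : Tendsto (fun n => C * r ^ n / (1 - r)) atTop (𝓝 0) := by
    simpa using ((tendsto_pow_atTop_nhds_zero_of_lt_one hr₀ hr).const_mul C).div_const (1 - r)
  filter_upwards [hbound.eventually (gt_mem_nhds hε)] with n hn x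
  rw [dist_comm]
  exact (dist_le_of_le_geometric_of_tendsto r C hr (hF · x) (hG x) n).trans_lt hn

theorem IsUltrametricDist.exists_isLocallyConstant_dist_le {X : Type*} [PseudoMetricSpace X]
    [IsUltrametricDist X] {ε : ℝ} (hε : 0 < ε) :
    ∃ r : X → X, IsLocallyConstant r ∧ ∀ x, dist (r x) x ≤ ε := by
  let near : Setoid X :=
    { r := fun x y => dist x y ≤ ε
      iseqv :=
        { refl := fun x => by simpa using hε.le
          symm := fun h => by rwa [dist_comm]
          trans := fun hxy hyz => (dist_triangle_max _ _ _).trans (max_le hxy hyz) } }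
  refine ⟨fun x => (Quotient.mk near x).out, ?_, fun x => Quotient.exact (Quotient.out_eq (Quotient.mk near x))⟩
  refine IsLocallyConstant.iff_eventually_eq _ |>.2 fun x => ?_
  filter_upwards [Metric.ball_mem_nhds x hε] with y hy
  rw [Quotient.sound (Metric.mem_ball.1 hy).le]

section ApproxSection

variable {E F : Type*}

def IsApproxSection [SeminormedAddCommGroup E] [SeminormedAddCommGroup F] (f : E → F)
    (C ε : ℝ) (g : F → E) : Prop :=
  Continuous g ∧ ∀ y, ‖f (g y) - y‖ ≤ ε ∧ ‖g y‖ ≤ C * max ‖y‖ ε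

theorem exists_isApproxSection_of_isUltrametricDist [SeminormedAddCommGroup E]
    [SeminormedAddCommGroup F] [IsUltrametricDist F] (f : E → F) {C ε : ℝ} (hC : 0 ≤ C)
    (hf : ∀ y, ∃ x, f x = y ∧ ‖x‖ ≤ C * ‖y‖) (hε : 0 < ε) :
    ∃ g, IsApproxSection f C ε g := by
  obtain ⟨r, hr_const, hr⟩ := IsUltrametricDist.exists_isLocallyConstant_dist_le (X := F) hε
  choose x hfx hx using hf
  refine ⟨x ∘ r, (hr_const.comp x).continuous, fun y => ⟨?_, ?_⟩⟩
  · simpa [hfx, dist_eq_norm] using hr y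
  · have hr_norm : ‖r y‖ ≤ max ‖y‖ ε := by
      simpa [dist_eq_norm, max_comm] using
        (IsUltrametricDist.dist_triangle_max (r y) y 0).trans (max_le_max (hr y) le_rfl)
    exact (hx _).trans (mul_le_mul_of_nonneg_left hr_norm hC)

variable [SeminormedAddCommGroup E] [NormedAddCommGroup F]

def sectionApprox (f : E → F) (g : ℕ → F → E) : ℕ → F → E
  | 0 => g 0
  | n + 1 => fun y => sectionApprox f g n y + g (n + 1) (y - f (sectionApprox f g n y))

variable {f : E →+ F} {g : ℕ → F → E} {C : ℝ}

theorem continuous_sectionApprox (hf : Continuous f) (hg : ∀ n, Continuous (g n)) (n : ℕ) :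
    Continuous (sectionApprox f g n) := by
  induction n with
  | zero => exact hg 0
  | succ n ih => exact ih.add ((hg _).comp (continuous_id.sub (hf.comp ih)))

section Corrections

variable (hg : ∀ n, IsApproxSection f C (2⁻¹ ^ n) (g n))
include hg

theorem norm_sub_map_sectionApprox_le (n : ℕ) (y : F) :
    ‖y - f (sectionApprox f g n y)‖ ≤ 2⁻¹ ^ n := by
  cases n with
  | zero => simpa [sectionApprox, norm_sub_rev] using ((hg 0).2 y).1
  | succ n =>
    have := ((hg (n + 1)).2 (y - f (sectionApprox f g n y))).1
    rw [norm_sub_rev] at this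
    simpa [sectionApprox, sub_sub] using this

theorem dist_sectionApprox_succ_le (n : ℕ) (y : F) :
    dist (sectionApprox f g n y) (sectionApprox f g (n + 1) y) ≤ C * 2⁻¹ ^ n := by
  have hC : 0 ≤ C := by
    simpa using (norm_nonneg _).trans ((hg 0).2 0).2
  have hmax : max ‖y - f (sectionApprox f g n y)‖ (2⁻¹ ^ (n + 1)) ≤ (2⁻¹ : ℝ) ^ n :=
    max_le (norm_sub_map_sectionApprox_le hg n y)
      (pow_le_pow_of_le_one (by norm_num) (by norm_num) n.le_succ)
  simpa [sectionApprox, dist_eq_norm] using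
    ((hg (n + 1)).2 _).2.trans (mul_le_mul_of_nonneg_left hmax hC)

theorem tendsto_map_sectionApprox (y : F) :
    Tendsto (fun n => f (sectionApprox f g n y)) atTop (𝓝 y) := by
  rw [tendsto_iff_norm_sub_tendsto_zero]
  refine squeeze_zero (fun n => norm_nonneg _) (fun n => ?_)
    (tendsto_pow_atTop_nhds_zero_of_lt_one (by norm_num : (0 : ℝ) ≤ 2⁻¹) (by norm_num))
  rw [norm_sub_rev]
  exact norm_sub_map_sectionApprox_le hg n y

end Corrections

theorem exists_continuous_rightInverse_of_isApproxSection [CompleteSpace E]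
    (hf : Continuous f) (h : ∀ ε > 0, ∃ g, IsApproxSection f C ε g) :
    ∃ s : F → E, Continuous s ∧ Function.RightInverse s f := by
  choose g hg using fun n : ℕ => h (2⁻¹ ^ n) (by positivity)
  obtain ⟨s, hs⟩ := exists_tendstoUniformly_of_dist_le_geometric (by norm_num) (by norm_num)
    (dist_sectionApprox_succ_le hg)
  refine ⟨s, hs.continuous (.of_forall (continuous_sectionApprox hf fun n => (hg n).1)), ?_⟩
  exact fun y => tendsto_nhds_unique ((hf.tendsto _).comp (hs.tendsto_at y))
    (tendsto_map_sectionApprox hg y)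

end ApproxSection

theorem stmt_3_general {p : ℕ} [Fact p.Prime] {B₁ B₂ : Type*}
    [NormedAddCommGroup B₁] [NormedSpace ℚ_[p] B₁] [CompleteSpace B₁]
    [NormedAddCommGroup B₂] [NormedSpace ℚ_[p] B₂] [CompleteSpace B₂] [IsUltrametricDist B₂]
    (f : B₁ →L[ℚ_[p]] B₂) (hf : Function.Surjective f) :
    ∃ s : B₂ → B₁, Continuous s ∧ ∀ y, f (s y) = y := by
  obtain ⟨C, hC, hpre⟩ := f.exists_preimage_norm_le hf
  exact exists_continuous_rightInverse_of_isApproxSection (f := (f : B₁ →+ B₂)) f.continuous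
    fun ε hε => exists_isApproxSection_of_isUltrametricDist f hC.le hpre hε

/-- Every continuous linear surjection of `p`-adic Banach spaces admits a
continuous (not necessarily linear) section. -/
theorem stmt_3 {p : ℕ} [Fact p.Prime] {B₁ B₂ : Type*}
    [NormedAddCommGroup B₁] [NormedSpace ℚ_[p] B₁] [CompleteSpace B₁] [IsUltrametricDist B₁]
    [NormedAddCommGroup B₂] [NormedSpace ℚ_[p] B₂] [CompleteSpace B₂] [IsUltrametricDist B₂]
    (f : B₁ →L[ℚ_[p]] B₂) (hf : Function.Surjective f) :
    ∃ s : B₂ → B₁, Continuous s ∧ ∀ y, f (s y) = y :=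
  stmt_3_general f hf
end

section
/- Let D be a K₀-vector space with bijective φ and nilpotent N satisfying Nφ = pφN, and suppose all eigenvalues of φ (over an algebraic closure) avoid 1 and p^{-1}: i.e. 1−φ is bijective on D^{N=0} and φ − p^{-1} is injective on D/ND. Then H⁰(𝔠) = 0 and H¹(𝔠) = 0 for the complex 𝔠 of the previous statement. -/
/-!
By the cocycle condition `λ - pφλ ∈ ND`, so injectivity of `1 - pφ` on `D/ND` gives `λ = Nz`.
Subtracting the coboundary `δ₀ z` leaves a cocycle `(0, μ')`, i.e. `μ' ∈ D^{N=0}`, and `μ'`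
is a coboundary because `1 - φ` is onto `D^{N=0}`.
-/

section Coboundary

variable {R M : Type*} [CommRing R] [AddCommGroup M] [Module R M] {N φ : M →ₗ[R] M} {c : R}

lemma map_sub_map_eq_of_comm (hrel : ∀ x, N (φ x) = c • φ (N x)) (z : M) :
    N (z - φ z) = N z - c • φ (N z) := by
  rw [map_sub, hrel]

lemma exists_coboundary_of_eq_map (hrel : ∀ x, N (φ x) = c • φ (N x))
    (hsurj : ∀ y, N y = 0 → ∃ x, N x = 0 ∧ x - φ x = y)
    {l m z : M} (hcoc : N m = l - c • φ l) (hz : l = N z) :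
    ∃ ν, N ν = l ∧ ν - φ ν = m := by
  have hker : N (m - (z - φ z)) = 0 := by
    rw [map_sub, map_sub_map_eq_of_comm hrel, ← hz, hcoc, sub_self]
  obtain ⟨x, hxN, hxφ⟩ := hsurj _ hker
  refine ⟨z + x, by rw [map_add, hxN, add_zero, hz], ?_⟩
  rw [map_add, add_sub_add_comm, hxφ, add_sub_cancel]

end Coboundary

theorem stmt_7_general {K₀ : Type*} [Field K₀] {D : Type*} [AddCommGroup D] [Module K₀ D]
    (p : ℕ) (N φ : D →ₗ[K₀] D)
    (hrel : ∀ x : D, N (φ x) = (p : K₀) • φ (N x))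
    -- `1 − φ` is bijective on `D^{N=0}`
    (h1φinj : ∀ x : D, N x = 0 → x - φ x = 0 → x = 0)
    (h1φsurj : ∀ y : D, N y = 0 → ∃ x : D, N x = 0 ∧ x - φ x = y)
    -- `φ − p⁻¹` is injective on `D/ND`, i.e. `1 − pφ` is injective on `D/ND`
    (hquotinj : ∀ l : D, (∃ z : D, l - (p : K₀) • φ l = N z) → ∃ z : D, l = N z) :
    -- `H⁰(𝔠) = 0`
    (∀ x : D, N x = 0 → φ x = x → x = 0) ∧
    -- `H¹(𝔠) = 0`: every 1-cocycle `(λ, μ)` is a coboundary `δ₀(ν)`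
    (∀ l m : D, N m = l - (p : K₀) • φ l → ∃ ν : D, N ν = l ∧ ν - φ ν = m) := by
  refine ⟨fun x hN hfix => h1φinj x hN (by rw [hfix, sub_self]), fun l m hcoc => ?_⟩
  obtain ⟨z, hz⟩ := hquotinj l ⟨m, hcoc.symm⟩
  exact exists_coboundary_of_eq_map hrel h1φsurj hcoc hz

/-- Let `D` be a `K₀`-vector space with bijective `φ` and nilpotent `N`
satisfying `Nφ = pφN`.  If `1 − φ` is bijective on `D^{N=0}` and `φ − p⁻¹` is injective on
`D/ND` (equivalently `1 − pφ` is injective on `D/ND`), then `H⁰(𝔠) = 0` and `H¹(𝔠) = 0` for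
the complex `𝔠 : D → D ⊕ D → D`, `δ₀(ν) = (Nν, (1−φ)ν)`, `δ₁(λ,μ) = Nμ − (1−pφ)λ`. -/
theorem stmt_7 {K₀ : Type*} [Field K₀] {D : Type*} [AddCommGroup D] [Module K₀ D]
    (p : ℕ) (hp : p.Prime) (N φ : D →ₗ[K₀] D)
    (hφbij : Function.Bijective φ) (hNnil : ∃ k : ℕ, N ^ k = 0)
    (hrel : ∀ x : D, N (φ x) = (p : K₀) • φ (N x))
    -- `1 − φ` is bijective on `D^{N=0}`
    (h1φinj : ∀ x : D, N x = 0 → x - φ x = 0 → x = 0)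
    (h1φsurj : ∀ y : D, N y = 0 → ∃ x : D, N x = 0 ∧ x - φ x = y)
    -- `φ − p⁻¹` is injective on `D/ND`, i.e. `1 − pφ` is injective on `D/ND`
    (hquotinj : ∀ l : D, (∃ z : D, l - (p : K₀) • φ l = N z) → ∃ z : D, l = N z) :
    -- `H⁰(𝔠) = 0`
    (∀ x : D, N x = 0 → φ x = x → x = 0) ∧
    -- `H¹(𝔠) = 0`: every 1-cocycle `(λ, μ)` is a coboundary `δ₀(ν)`
    (∀ l m : D, N m = l - (p : K₀) • φ l → ∃ ν : D, N ν = l ∧ ν - φ ν = m) :=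
  stmt_7_general p N φ hrel h1φinj h1φsurj hquotinj
end

section
/- Let D be an abelian group with surjective endomorphism (φ−1) : D' → D where D' ⊇ D is a larger group, and let γ act on everything commuting with φ. Suppose for x ∈ D there is b ∈ D' with (φ−1)b = x. Then the assignment (x,y) ↦ (σ ↦ ((σ−1)/(γ−1))·y − (σ−1)b), for (x,y) satisfying the Herr cocycle condition (γ−1)x = (φ−1)y and σ ranging over a group G surjecting onto ⟨γ⟩ with kernel acting trivially on D, defines a 1-cocycle of G with values in D'^{φ=1}, i.e. its values are killed by φ−1, and its class is independent of the choice of b modulo coboundaries. -/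
/-!
The values of `c` are `φ`-invariant because `φ - 1` commutes with `γ` and acts on the data
`(y, b)` of `c` by `(y, b) ↦ ((φ - 1) y, (φ - 1) b) = ((γ - 1) x, x)`, and for these data
the sum `Σ_{i<m} γ^i (γ - 1) x` telescopes to `(γ^m - 1) x`, cancelling the `b`-term.
-/

namespace Stmt19

variable {D' : Type*} [AddCommGroup D']

/-- The cocycle `σ ↦ (σ−1)/(γ−1)·y − (σ−1)b` for `σ = γ^m`:
`c m = Σ_{i<m} γ^i y − (γ^m b − b)`. -/
def coc (γ : D' →+ D') (y b : D') (m : ℕ) : D' :=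
  (∑ i ∈ Finset.range m, (⇑γ)^[i] y) - ((⇑γ)^[m] b - b)

theorem iterate_map_finset_sum {M F ι : Type*} [AddCommMonoid M] [FunLike F M M]
    [AddMonoidHomClass F M M] (f : F) (n : ℕ) (s : Finset ι) (g : ι → M) :
    (⇑f)^[n] (∑ i ∈ s, g i) = ∑ i ∈ s, (⇑f)^[n] (g i) := by
  induction n with
  | zero => rfl
  | succ n ih => simp only [Function.iterate_succ_apply', ih, map_sum]

theorem sum_range_iterate_sub_self {G F : Type*} [AddCommGroup G] [FunLike F G G]
    [AddMonoidHomClass F G G] (f : F) (x : G) (m : ℕ) :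
    ∑ i ∈ Finset.range m, (⇑f)^[i] (f x - x) = (⇑f)^[m] x - x := by
  simp only [iterate_map_sub, ← Function.iterate_succ_apply]
  exact Finset.sum_range_sub (fun i ↦ (⇑f)^[i] x) m

section

variable (γ : D' →+ D')

theorem coc_sub_coc (y b y' b' : D') (m : ℕ) :
    coc γ y b m - coc γ y' b' m = coc γ (y - y') (b - b') m := by
  simp only [coc, iterate_map_sub, Finset.sum_sub_distrib]
  abel

theorem map_coc {φ : D' →+ D'} (hcomm : Function.Commute φ γ) (y b : D') (m : ℕ) :
    φ (coc γ y b m) = coc γ (φ y) (φ b) m := by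
  simp only [coc, map_sub, map_sum, (hcomm.iterate_right _).eq]

theorem coc_sub_self_self (x : D') (m : ℕ) : coc γ (γ x - x) x m = 0 := by
  rw [coc, sum_range_iterate_sub_self, sub_self]

theorem coc_add (y b : D') (m m' : ℕ) :
    coc γ y b (m + m') = (⇑γ)^[m] (coc γ y b m') + coc γ y b m := by
  simp only [coc, Finset.sum_range_add, iterate_map_sub, iterate_map_finset_sum,
    Function.iterate_add_apply]
  abel

theorem coc_sub_coc_right (y b b' : D') (m : ℕ) :
    coc γ y b m - coc γ y b' m = (⇑γ)^[m] (b' - b) - (b' - b) := by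
  simp only [coc, iterate_map_sub]
  abel

end

/-- Suppose `φ` and `γ` are commuting additive operators, `(γ−1)x = (φ−1)y`
(the Herr cocycle condition), and `(φ−1)b = x`.  Then `c : σ = γ^m ↦ (σ−1)/(γ−1)·y − (σ−1)b`
(with `(σ−1)/(γ−1) = Σ_{i<m} γ^i`) is a 1-cocycle with values in `D'^{φ=1}` — its values
are killed by `φ−1` and `c_{στ} = σ c_τ + c_σ` — and its class is independent of the
choice of `b` modulo coboundaries with values in `D'^{φ=1}`. -/
theorem stmt_19 (φ γ : D' →+ D') (hcomm : ∀ z : D', φ (γ z) = γ (φ z))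
    (x y b b' : D')
    (hcoc : γ x - x = φ y - y) (hb : φ b - b = x) (hb' : φ b' - b' = x) :
    -- the values lie in D'^{φ=1}
    (∀ m : ℕ, φ (coc γ y b m) = coc γ y b m) ∧
    -- the 1-cocycle condition c_{στ} = σ c_τ + c_σ  (σ = γ^m, τ = γ^{m'})
    (∀ m m' : ℕ, coc γ y b (m + m') = (⇑γ)^[m] (coc γ y b m') + coc γ y b m) ∧
    -- independence of b: a different choice changes c by the coboundary of b'−b ∈ D'^{φ=1}
    (φ (b' - b) = b' - b ∧
      ∀ m : ℕ, coc γ y b m - coc γ y b' m = (⇑γ)^[m] (b' - b) - (b' - b)) := by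
  refine ⟨fun m ↦ ?_, coc_add γ y b, ?_, coc_sub_coc_right γ y b b'⟩
  · rw [← sub_eq_zero, map_coc γ hcomm, coc_sub_coc, ← hcoc, hb, coc_sub_self_self]
  · rw [map_sub, sub_eq_sub_iff_sub_eq_sub, hb, hb']

end Stmt19
end
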